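/- arXiv:1910.01987 — 2 statements merged into one kernel-verified Lean document; each statement's English description precedes it below -/
import Mathlib

section
/- Let H be a finite-dimensional complex inner product space, Γ a self-adjoint involution on H (Γ² = 1, Γ* = Γ), and D a self-adjoint operator anti-commuting with Γ. Write H = H₊ ⊕ H₋ for the ±1 eigenspaces of Γ and D₊ : H₊ → H₋, D₋ : H₋ → H₊ for the corresponding components of D. Then for any m > 0, the index of D, defined as dim ker D₊ − dim ker D₋, equals half the difference of the signatures of D + mΓ and D − mΓ, i.e. ind(D) = (η(D+mΓ) − η(D−mΓ))/2, where η(T) denotes the number of positive eigenvalues minus the number of negative eigenvalues of T counted with multiplicity. -/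
/-!
Put `T = D + mΓ` and `A = ΓD`. Since `A` anticommutes with `T`, it maps the `μ`-eigenspace of `T`
to the `(-μ)`-eigenspace, hence the positive spectral subspace `P` of `T` into the negative one `N`
and back; and `ker A² = ker D² = ker D = ker A` because `D` is self-adjoint. Factoring `A²|_P`
through `N` (and `A²|_N` through `P`) gives `dim P - dim (P ∩ ker D) = dim N - dim (N ∩ ker D)`.
On `ker D` the operator `T` acts as `mΓ`, so `ker D ∩ H₊ ⊆ P` and `ker D ∩ H₋ ⊆ N`; as `P ∩ N = 0`
and `ker D = (ker D ∩ H₊) ⊕ (ker D ∩ H₋)`, both inclusions are equalities. Hence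
`η(D + mΓ) = dim ker D₊ - dim ker D₋`, and replacing `Γ` by `-Γ` gives `η(D - mΓ)`.
-/

open Module LinearMap

/-- The signature (number of positive eigenvalues minus number of negative
eigenvalues, counted with multiplicity) of an operator on a complex inner
product space, computed via the dimensions of the sums of eigenspaces with
positive (resp. negative) real eigenvalues. -/
noncomputable def eta {H : Type*} [NormedAddCommGroup H] [InnerProductSpace ℂ H]
    (T : H →ₗ[ℂ] H) : ℤ :=
  (Module.finrank ℂ ↥(⨆ μ : {μ : ℝ // 0 < μ}, Module.End.eigenspace T (μ : ℂ)) : ℤ) -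
  (Module.finrank ℂ ↥(⨆ μ : {μ : ℝ // μ < (0 : ℝ)}, Module.End.eigenspace T (μ : ℂ)) : ℤ)

open Module.End

section LinearAlgebra

variable {K V : Type*} [Field K] [AddCommGroup V] [Module K V]

theorem finrank_ker_restrict {W : Type*} [AddCommGroup W] [Module K W] {p : Submodule K V}
    {q : Submodule K W} (f : V →ₗ[K] W) (hf : ∀ x ∈ p, f x ∈ q) :
    finrank K (ker (f.restrict hf)) = finrank K ↥(p ⊓ ker f) := by
  have hcomap : (ker f).comap p.subtype = (p ⊓ ker f).comap p.subtype := by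
    rw [Submodule.comap_inf, Submodule.comap_subtype_self, top_inf_eq]
  rw [ker_restrict hf, hcomap]
  exact (Submodule.comapSubtypeEquivOfLe inf_le_left).finrank_eq

variable [FiniteDimensional K V]

theorem finrank_add_finrank_inf_ker_le {A : V →ₗ[K] V} {P N : Submodule K V}
    (hPN : ∀ x ∈ P, A x ∈ N) (hNP : ∀ x ∈ N, A x ∈ P) (hA : ker (A ∘ₗ A) = ker A) :
    finrank K P + finrank K ↥(N ⊓ ker A) ≤ finrank K N + finrank K ↥(P ⊓ ker A) := by
  have hkerP : finrank K (ker (A.restrict hNP ∘ₗ A.restrict hPN)) = finrank K ↥(P ⊓ ker A) := by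
    rw [← hA, ← finrank_ker_restrict (A ∘ₗ A) fun x hx => hNP _ (hPN x hx)]
    rfl
  have hP := finrank_range_add_finrank_ker (A.restrict hNP ∘ₗ A.restrict hPN)
  have hN := finrank_range_add_finrank_ker (A.restrict hNP)
  have hrange := Submodule.finrank_mono (range_comp_le_range (A.restrict hPN) (A.restrict hNP))
  rw [finrank_ker_restrict] at hN
  omega

theorem finrank_sub_finrank_inf_ker_eq {A : V →ₗ[K] V} {P N : Submodule K V}
    (hPN : ∀ x ∈ P, A x ∈ N) (hNP : ∀ x ∈ N, A x ∈ P) (hA : ker (A ∘ₗ A) = ker A) :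
    (finrank K P : ℤ) - finrank K ↥(P ⊓ ker A) = finrank K N - finrank K ↥(N ⊓ ker A) := by
  have := finrank_add_finrank_inf_ker_le hPN hNP hA
  have := finrank_add_finrank_inf_ker_le hNP hPN hA
  omega

theorem finrank_eq_finrank_eigenspace_inf_add {Γ : V →ₗ[K] V} (hΓ : Γ ∘ₗ Γ = LinearMap.id)
    (h2 : (2 : K) ≠ 0) {W : Submodule K V} (hW : ∀ x ∈ W, Γ x ∈ W) :
    finrank K W = finrank K ↥(eigenspace Γ 1 ⊓ W) + finrank K ↥(eigenspace Γ (-1) ⊓ W) := by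
  have hdisj : eigenspace Γ 1 ⊓ W ⊓ (eigenspace Γ (-1) ⊓ W) = ⊥ := by
    have hne : (1 : K) ≠ -1 := by
      intro h; apply h2; linear_combination h
    exact disjoint_iff.mp <| ((eigenspaces_iSupIndep Γ).pairwiseDisjoint hne).mono
      inf_le_left inf_le_left
  have hsup : eigenspace Γ 1 ⊓ W ⊔ eigenspace Γ (-1) ⊓ W = W := by
    refine le_antisymm (sup_le inf_le_right inf_le_right) fun x hx => ?_
    have hΓΓ : Γ (Γ x) = x := LinearMap.congr_fun hΓ x
    have hplus : (2⁻¹ : K) • (x + Γ x) ∈ eigenspace Γ 1 ⊓ W :=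
      Submodule.mem_inf.mpr ⟨by rw [mem_eigenspace_iff, map_smul, map_add, hΓΓ]; module,
        W.smul_mem _ (W.add_mem hx (hW x hx))⟩
    have hminus : (2⁻¹ : K) • (x - Γ x) ∈ eigenspace Γ (-1) ⊓ W :=
      Submodule.mem_inf.mpr ⟨by rw [mem_eigenspace_iff, map_smul, map_sub, hΓΓ]; module,
        W.smul_mem _ (W.sub_mem hx (hW x hx))⟩
    have hsplit : x = (2⁻¹ : K) • (x + Γ x) + (2⁻¹ : K) • (x - Γ x) := by
      rw [← smul_add, add_add_sub_cancel, ← two_smul K x, smul_smul, inv_mul_cancel₀ h2, one_smul]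
    exact hsplit ▸ Submodule.add_mem_sup hplus hminus
  rw [← Submodule.finrank_sup_add_finrank_inf_eq, hsup, hdisj, finrank_bot, add_zero]

theorem finrank_inf_eq_of_disjoint {P N W W₁ W₂ : Submodule K V} (hPN : Disjoint P N)
    (h₁ : W₁ ≤ P ⊓ W) (h₂ : W₂ ≤ N ⊓ W) (hW : finrank K W = finrank K W₁ + finrank K W₂) :
    finrank K ↥(P ⊓ W) = finrank K W₁ ∧ finrank K ↥(N ⊓ W) = finrank K W₂ := by
  have hsum := Submodule.finrank_sup_add_finrank_inf_eq (P ⊓ W) (N ⊓ W)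
  rw [disjoint_iff.mp (hPN.mono inf_le_left inf_le_left), finrank_bot, add_zero] at hsum
  have hle := Submodule.finrank_mono (sup_le inf_le_right inf_le_right : P ⊓ W ⊔ N ⊓ W ≤ W)
  have := Submodule.finrank_mono h₁
  have := Submodule.finrank_mono h₂
  omega

end LinearAlgebra

section Involution

variable {K V : Type*} [Field K] [AddCommGroup V] [Module K V] {Γ D : V →ₗ[K] V}

theorem eigenspace_neg (f : V →ₗ[K] V) (μ : K) : eigenspace (-f) μ = eigenspace f (-μ) := by
  ext x
  rw [mem_eigenspace_iff, mem_eigenspace_iff, LinearMap.neg_apply, neg_smul, neg_eq_iff_eq_neg]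

theorem ker_comp_of_involutive (hΓ : Γ ∘ₗ Γ = LinearMap.id) (D : V →ₗ[K] V) :
    ker (Γ ∘ₗ D) = ker D :=
  ker_comp_of_ker_eq_bot D <| ker_eq_bot_of_inverse hΓ

theorem eigenspace_inf_ker_le (μ c : K) :
    eigenspace Γ μ ⊓ ker D ≤ eigenspace (D + c • Γ) (c * μ) := by
  rintro x ⟨hΓx, hDx⟩
  rw [SetLike.mem_coe, mem_eigenspace_iff] at hΓx
  rw [mem_eigenspace_iff, LinearMap.add_apply, LinearMap.smul_apply, mem_ker.mp hDx, hΓx,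
    smul_smul, zero_add]

variable (hanti : D ∘ₗ Γ = -(Γ ∘ₗ D))
include hanti

theorem apply_mem_ker_of_anticomm {x : V} (hx : x ∈ ker D) : Γ x ∈ ker D := by
  rw [mem_ker, ← comp_apply, hanti, LinearMap.neg_apply, comp_apply, mem_ker.mp hx, map_zero,
    neg_zero]

theorem add_smul_comp_comp_eq_neg (hΓ : Γ ∘ₗ Γ = LinearMap.id) (c : K) :
    (D + c • Γ) ∘ₗ (Γ ∘ₗ D) = -((Γ ∘ₗ D) ∘ₗ (D + c • Γ)) := by
  ext x
  have hDΓ (y : V) : D (Γ y) = -Γ (D y) := LinearMap.congr_fun hanti y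
  have hΓΓ (y : V) : Γ (Γ y) = y := LinearMap.congr_fun hΓ y
  simp only [comp_apply, LinearMap.add_apply, LinearMap.smul_apply, LinearMap.neg_apply, map_add,
    map_smul, hDΓ, hΓΓ, map_neg]
  module

theorem ker_comp_comp_self (hΓ : Γ ∘ₗ Γ = LinearMap.id) :
    ker ((Γ ∘ₗ D) ∘ₗ (Γ ∘ₗ D)) = ker (D ∘ₗ D) := by
  have hsq : (Γ ∘ₗ D) ∘ₗ (Γ ∘ₗ D) = -(D ∘ₗ D) := by
    ext x
    have hDΓ : D (Γ (D x)) = -Γ (D (D x)) := LinearMap.congr_fun hanti (D x)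
    have hΓΓ : Γ (Γ (D (D x))) = D (D x) := LinearMap.congr_fun hΓ (D (D x))
    simp only [comp_apply, LinearMap.neg_apply, hDΓ, map_neg, hΓΓ]
  rw [hsq, ker_neg]

end Involution

theorem LinearMap.IsSymmetric.ker_comp_self {𝕜 E : Type*} [RCLike 𝕜] [NormedAddCommGroup E]
    [InnerProductSpace 𝕜 E] {T : E →ₗ[𝕜] E} (hT : T.IsSymmetric) : ker (T ∘ₗ T) = ker T := by
  refine le_antisymm (fun x hx => ?_) (ker_le_ker_comp T T)
  rw [mem_ker, ← inner_self_eq_zero (𝕜 := 𝕜), hT, ← comp_apply, mem_ker.mp hx, inner_zero_right]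

section SpectralSubspace

variable {V : Type*} [AddCommGroup V] [Module ℂ V]

def positiveSpectralSubspace (T : V →ₗ[ℂ] V) : Submodule ℂ V :=
  ⨆ μ : {μ : ℝ // 0 < μ}, eigenspace T (μ : ℂ)

def negativeSpectralSubspace (T : V →ₗ[ℂ] V) : Submodule ℂ V :=
  ⨆ μ : {μ : ℝ // μ < 0}, eigenspace T (μ : ℂ)

theorem eigenspace_le_positiveSpectralSubspace (T : V →ₗ[ℂ] V) {μ : ℝ} (hμ : 0 < μ) :
    eigenspace T (μ : ℂ) ≤ positiveSpectralSubspace T :=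
  le_iSup (fun ν : {ν : ℝ // 0 < ν} => eigenspace T (ν : ℂ)) ⟨μ, hμ⟩

theorem eigenspace_le_negativeSpectralSubspace (T : V →ₗ[ℂ] V) {μ : ℝ} (hμ : μ < 0) :
    eigenspace T (μ : ℂ) ≤ negativeSpectralSubspace T :=
  le_iSup (fun ν : {ν : ℝ // ν < 0} => eigenspace T (ν : ℂ)) ⟨μ, hμ⟩

theorem disjoint_positiveSpectralSubspace_negativeSpectralSubspace (T : V →ₗ[ℂ] V) :
    Disjoint (positiveSpectralSubspace T) (negativeSpectralSubspace T) := by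
  have hindep : iSupIndep fun μ : ℝ => eigenspace T (μ : ℂ) :=
    (eigenspaces_iSupIndep T).comp Complex.ofReal_injective
  have := hindep.disjoint_biSup_biSup (Set.Ioi_disjoint_Iio_same (a := 0))
  simpa only [positiveSpectralSubspace, negativeSpectralSubspace, iSup_subtype', Set.mem_Ioi,
    Set.mem_Iio] using this

variable {T A : V →ₗ[ℂ] V} (h : T ∘ₗ A = -(A ∘ₗ T))
include h

theorem apply_mem_eigenspace_neg_of_anticomm {μ : ℂ} {x : V} (hx : x ∈ eigenspace T μ) :
    A x ∈ eigenspace T (-μ) := by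
  rw [mem_eigenspace_iff] at hx ⊢
  rw [← comp_apply, h, LinearMap.neg_apply, comp_apply, hx, map_smul, neg_smul]

theorem apply_mem_negativeSpectralSubspace {x : V} (hx : x ∈ positiveSpectralSubspace T) :
    A x ∈ negativeSpectralSubspace T := by
  have hle : positiveSpectralSubspace T ≤ (negativeSpectralSubspace T).comap A :=
    iSup_le fun μ y hy => eigenspace_le_negativeSpectralSubspace T (neg_neg_of_pos μ.2)
      (by simpa using apply_mem_eigenspace_neg_of_anticomm h hy)
  exact hle hx

theorem apply_mem_positiveSpectralSubspace {x : V} (hx : x ∈ negativeSpectralSubspace T) :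
    A x ∈ positiveSpectralSubspace T := by
  have hle : negativeSpectralSubspace T ≤ (positiveSpectralSubspace T).comap A :=
    iSup_le fun μ y hy => eigenspace_le_positiveSpectralSubspace T (neg_pos_of_neg μ.2)
      (by simpa using apply_mem_eigenspace_neg_of_anticomm h hy)
  exact hle hx

end SpectralSubspace

section Chirality

variable {H : Type*} [NormedAddCommGroup H] [InnerProductSpace ℂ H]

theorem eta_eq_finrank_sub_finrank (T : H →ₗ[ℂ] H) :
    eta T = (finrank ℂ (positiveSpectralSubspace T) : ℤ) - finrank ℂ (negativeSpectralSubspace T) :=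
  rfl

theorem eta_add_smul_eq [FiniteDimensional ℂ H] {Γ D : H →ₗ[ℂ] H} (hΓ : Γ ∘ₗ Γ = LinearMap.id)
    (hD : D.IsSymmetric) (hanti : D ∘ₗ Γ = -(Γ ∘ₗ D)) {m : ℝ} (hm : 0 < m) :
    eta (D + (m : ℂ) • Γ) =
      (finrank ℂ ↥(eigenspace Γ 1 ⊓ ker D) : ℤ) - finrank ℂ ↥(eigenspace Γ (-1) ⊓ ker D) := by
  have hTA := add_smul_comp_comp_eq_neg hanti hΓ (m : ℂ)
  have hkerA : ker (Γ ∘ₗ D) = ker D := ker_comp_of_involutive hΓ D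
  have hrank := finrank_sub_finrank_inf_ker_eq
    (fun _ => apply_mem_negativeSpectralSubspace hTA)
    (fun _ => apply_mem_positiveSpectralSubspace hTA)
    (by rw [ker_comp_comp_self hanti hΓ, hD.ker_comp_self, hkerA])
  have hpos : eigenspace Γ 1 ⊓ ker D ≤ positiveSpectralSubspace (D + (m : ℂ) • Γ) ⊓ ker D := by
    refine le_inf ((eigenspace_inf_ker_le 1 (m : ℂ)).trans ?_) inf_le_right
    rw [mul_one]
    exact eigenspace_le_positiveSpectralSubspace _ hm
  have hneg : eigenspace Γ (-1) ⊓ ker D ≤ negativeSpectralSubspace (D + (m : ℂ) • Γ) ⊓ ker D := by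
    refine le_inf ((eigenspace_inf_ker_le (-1) (m : ℂ)).trans ?_) inf_le_right
    rw [mul_neg_one, ← Complex.ofReal_neg]
    exact eigenspace_le_negativeSpectralSubspace _ (neg_neg_of_pos hm)
  obtain ⟨hP, hN⟩ := finrank_inf_eq_of_disjoint
    (disjoint_positiveSpectralSubspace_negativeSpectralSubspace _) hpos hneg
    (finrank_eq_finrank_eigenspace_inf_add hΓ two_ne_zero fun _ => apply_mem_ker_of_anticomm hanti)
  rw [hkerA] at hrank
  rw [eta_eq_finrank_sub_finrank]
  omega

end Chirality

theorem index_eq_half_eta_difference_general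
    {H : Type*} [NormedAddCommGroup H] [InnerProductSpace ℂ H] [FiniteDimensional ℂ H]
    (Γ D : H →ₗ[ℂ] H)
    (hΓinv : Γ ∘ₗ Γ = LinearMap.id)
    (hDsa : D.IsSymmetric) (hanti : D ∘ₗ Γ = -(Γ ∘ₗ D))
    -- `H₊` and `H₋` are the `±1`-eigenspaces of `Γ`
    (hp : ∀ x ∈ Module.End.eigenspace Γ (1 : ℂ), D x ∈ Module.End.eigenspace Γ (-1 : ℂ))
    (hm : ∀ x ∈ Module.End.eigenspace Γ (-1 : ℂ), D x ∈ Module.End.eigenspace Γ (1 : ℂ))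
    (m : ℝ) (hmpos : 0 < m) :
    2 * ((Module.finrank ℂ (LinearMap.ker (D.restrict hp)) : ℤ) -
          (Module.finrank ℂ (LinearMap.ker (D.restrict hm)) : ℤ)) =
      eta (D + (m : ℂ) • Γ) - eta (D - (m : ℂ) • Γ) := by
  have hΓinv' : (-Γ) ∘ₗ (-Γ) = LinearMap.id := by rw [neg_comp, comp_neg, neg_neg, hΓinv]
  have hanti' : D ∘ₗ (-Γ) = -((-Γ) ∘ₗ D) := by rw [comp_neg, hanti, neg_comp]
  have hplus := eta_add_smul_eq hΓinv hDsa hanti hmpos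
  have hminus := eta_add_smul_eq hΓinv' hDsa hanti' hmpos
  rw [eigenspace_neg, eigenspace_neg, neg_neg, smul_neg, ← sub_eq_add_neg] at hminus
  rw [hplus, hminus, finrank_ker_restrict, finrank_ker_restrict]
  ring

theorem index_eq_half_eta_difference
    {H : Type*} [NormedAddCommGroup H] [InnerProductSpace ℂ H] [FiniteDimensional ℂ H]
    (Γ D : H →ₗ[ℂ] H)
    (hΓsa : Γ.IsSymmetric) (hΓinv : Γ ∘ₗ Γ = LinearMap.id)
    (hDsa : D.IsSymmetric) (hanti : D ∘ₗ Γ = -(Γ ∘ₗ D))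
    -- `H₊` and `H₋` are the `±1`-eigenspaces of `Γ`
    (hp : ∀ x ∈ Module.End.eigenspace Γ (1 : ℂ), D x ∈ Module.End.eigenspace Γ (-1 : ℂ))
    (hm : ∀ x ∈ Module.End.eigenspace Γ (-1 : ℂ), D x ∈ Module.End.eigenspace Γ (1 : ℂ))
    (m : ℝ) (hmpos : 0 < m) :
    2 * ((Module.finrank ℂ (LinearMap.ker (D.restrict hp)) : ℤ) -
          (Module.finrank ℂ (LinearMap.ker (D.restrict hm)) : ℤ)) =
      eta (D + (m : ℂ) • Γ) - eta (D - (m : ℂ) • Γ) :=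
  index_eq_half_eta_difference_general Γ D hΓinv hDsa hanti hp hm m hmpos
end

section
/- Let A be a self-adjoint operator on a finite-dimensional complex inner product space E with no zero eigenvalues, and let λ_A > 0 be the smallest absolute value of an eigenvalue of A. For m > λ_A, consider on L²(ℝ; ℂ²⊗E) the operator D_m = c⊗∂_u + ε⊗A + m sgn₀·(Γ⊗id). Restricted to the finite-dimensional model: for each eigenvalue μ of A with |μ| ≥ λ_A and m > λ_A, the 2×2 operator c ∂_u + μ ε + m sgn₀ Γ on L²(ℝ;ℂ²) has spectrum disjoint from (−λ_A, λ_A); equivalently, ‖(c∂_u + με + m sgn₀ Γ)ψ‖ ≥ λ_A ‖ψ‖ for all ψ in the domain. -/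
open MeasureTheory Matrix

lemma measurable_realSign : Measurable Real.sign := by
  have : Real.sign = fun t : ℝ => if t < 0 then (-1:ℝ) else if 0 < t then 1 else 0 := by
    funext t; rw [Real.sign]
  rw [this]
  exact Measurable.ite measurableSet_Iio measurable_const
    (Measurable.ite measurableSet_Ioi measurable_const measurable_const)

lemma abs_realSign_le (t : ℝ) : |Real.sign t| ≤ 1 := by
  rcases lt_trichotomy t 0 with h|h|h
  · simp [Real.sign_of_neg h]
  · simp [h, Real.sign_zero]
  · simp [Real.sign_of_pos h]

lemma nsq (z : ℂ) : ‖z‖^2 = z.re^2 + z.im^2 := by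
  rw [Complex.sq_norm, Complex.normSq_apply]; ring

lemma key_identity (μ m s : ℝ) (a b da db : ℂ) :
    ‖db + (μ:ℂ)*b + ((m*s:ℝ):ℂ)*a‖^2 + ‖-da + (μ:ℂ)*a - ((m*s:ℝ):ℂ)*b‖^2
      = (‖db + ((m*s:ℝ):ℂ)*a‖^2 + ‖da + ((m*s:ℝ):ℂ)*b‖^2)
        + μ^2*(‖a‖^2+‖b‖^2)
        + μ * (2*(b.re*db.re + b.im*db.im - a.re*da.re - a.im*da.im)) := by
  simp only [nsq, Complex.add_re, Complex.add_im, Complex.mul_re, Complex.mul_im,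
    Complex.neg_re, Complex.neg_im, Complex.sub_re, Complex.sub_im,
    Complex.ofReal_re, Complex.ofReal_im]
  ring

lemma bound_aux (μ m s : ℝ) (hm : 0 ≤ m) (hs : |s| ≤ 1) (a b d : ℂ) :
    ‖d + (μ:ℂ)*b + ((m*s:ℝ):ℂ)*a‖^2 ≤ 3*(‖d‖^2 + μ^2*‖b‖^2 + m^2*‖a‖^2) := by
  have h1 : ‖d + (μ:ℂ)*b + ((m*s:ℝ):ℂ)*a‖ ≤ ‖d‖ + |μ| * ‖b‖ + m*‖a‖ := by
    refine (norm_add_le _ _).trans ?_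
    refine add_le_add ((norm_add_le _ _).trans (add_le_add le_rfl ?_)) ?_
    · simp [Complex.norm_real]
    · rw [norm_mul, Complex.norm_real, Real.norm_eq_abs, abs_mul, abs_of_nonneg hm]
      exact mul_le_mul_of_nonneg_right
        (mul_le_of_le_one_right hm hs) (norm_nonneg a)
  have h0 : (0:ℝ) ≤ ‖d‖ + |μ| * ‖b‖ + m*‖a‖ := by positivity
  nlinarith [norm_nonneg (d + (μ:ℂ)*b + ((m*s:ℝ):ℂ)*a), sq_abs μ,
    sq_nonneg (‖d‖ - |μ| * ‖b‖), sq_nonneg (‖d‖ - m*‖a‖), sq_nonneg (|μ| * ‖b‖ - m*‖a‖)]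

/-- Spectral gap of the one-dimensional domain-wall model operator
`c ∂_u + μ ε + m sgn₀ Γ` on `L²(ℝ; ℂ²)`: for `|μ| ≥ λ_A > 0` and `m > λ_A`,
`‖(c ∂_u + μ ε + m sgn₀ Γ) ψ‖_{L²} ≥ λ_A ‖ψ‖_{L²}` for all smooth compactly
supported `ψ`. -/
theorem domain_wall_model_spectral_gap
    (μ lamA m : ℝ) (hlam : 0 < lamA) (hμ : lamA ≤ |μ|) (hm : lamA < m)
    (ψ : ℝ → (Fin 2 → ℂ)) (hψ : ContDiff ℝ (⊤ : ℕ∞) ψ) (hsupp : HasCompactSupport ψ) :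
    let c : Matrix (Fin 2) (Fin 2) ℂ := !![0, 1; -1, 0]
    let ε : Matrix (Fin 2) (Fin 2) ℂ := !![0, 1; 1, 0]
    let Γ : Matrix (Fin 2) (Fin 2) ℂ := !![1, 0; 0, -1]
    let Tψ : ℝ → (Fin 2 → ℂ) := fun t =>
      c.mulVec (deriv ψ t) + (μ : ℂ) • ε.mulVec (ψ t) +
        ((m * Real.sign t : ℝ) : ℂ) • Γ.mulVec (ψ t)
    lamA ^ 2 * ∫ t : ℝ, (‖ψ t 0‖ ^ 2 + ‖ψ t 1‖ ^ 2) ≤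
      ∫ t : ℝ, (‖Tψ t 0‖ ^ 2 + ‖Tψ t 1‖ ^ 2) := by
  intro c ε Γ Tψ
  have hm0 : (0:ℝ) ≤ m := le_of_lt (hlam.trans hm)
  -- component formulas
  have hcomp : ∀ t, Tψ t 0 = deriv ψ t 1 + (μ:ℂ) * ψ t 1 + ((m * Real.sign t : ℝ):ℂ) * ψ t 0
      ∧ Tψ t 1 = -(deriv ψ t 0) + (μ:ℂ) * ψ t 0 - ((m * Real.sign t : ℝ):ℂ) * ψ t 1 := by
    intro t
    constructor <;>
      simp [Tψ, c, ε, Γ, Matrix.mulVec, dotProduct, Fin.sum_univ_two, Matrix.vecHead, Matrix.vecTail] <;> ring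
  -- abbreviations
  set P : ℝ → ℝ := fun t => ‖ψ t 0‖^2 + ‖ψ t 1‖^2 with hPdef
  set N : ℝ → ℝ := fun t => ‖deriv ψ t 1 + ((m * Real.sign t:ℝ):ℂ) * ψ t 0‖^2
      + ‖deriv ψ t 0 + ((m * Real.sign t:ℝ):ℂ) * ψ t 1‖^2 with hNdef
  set G : ℝ → ℝ := fun t => 2*((ψ t 1).re*(deriv ψ t 1).re + (ψ t 1).im*(deriv ψ t 1).im
      - (ψ t 0).re*(deriv ψ t 0).re - (ψ t 0).im*(deriv ψ t 0).im) with hGdef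
  set Φ : ℝ → ℝ := fun t => ‖Tψ t 0‖^2 + ‖Tψ t 1‖^2 with hΦdef
  -- pointwise identity
  have hpt : ∀ t, Φ t = N t + μ^2 * P t + μ * G t := by
    intro t
    have h := key_identity μ m (Real.sign t) (ψ t 0) (ψ t 1) (deriv ψ t 0) (deriv ψ t 1)
    simp only [hΦdef, hNdef, hPdef, hGdef, (hcomp t).1, (hcomp t).2]
    linarith [h]
  -- continuity facts
  have contψ : Continuous ψ := hψ.continuous
  have contd : Continuous (deriv ψ) := hψ.continuous_deriv (by simp)
  have cψi : ∀ i : Fin 2, Continuous fun t => ψ t i := fun i => (continuous_apply i).comp contψ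
  have cdi : ∀ i : Fin 2, Continuous fun t => deriv ψ t i := fun i => (continuous_apply i).comp contd
  -- vanishing outside support
  have hzero : ∀ t ∉ tsupport ψ, ψ t = 0 ∧ deriv ψ t = 0 := by
    intro t ht
    refine ⟨image_eq_zero_of_notMem_tsupport ht, ?_⟩
    have : t ∉ Function.support (deriv ψ) := fun h => ht (support_deriv_subset h)
    exact Function.notMem_support.mp this
  -- integrability of P
  have hPc : Continuous P := ((cψi 0).norm.pow 2).add ((cψi 1).norm.pow 2)
  have hPsupp : HasCompactSupport P := by
    refine HasCompactSupport.intro hsupp (fun x hx => ?_)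
    simp [hPdef, (hzero x hx).1]
  have hPint : Integrable P := hPc.integrable_of_hasCompactSupport hPsupp
  -- integrability of G
  have cre : ∀ i : Fin 2, Continuous fun t => (ψ t i).re :=
    fun i => Complex.continuous_re.comp (cψi i)
  have cim : ∀ i : Fin 2, Continuous fun t => (ψ t i).im :=
    fun i => Complex.continuous_im.comp (cψi i)
  have cdre : ∀ i : Fin 2, Continuous fun t => (deriv ψ t i).re :=
    fun i => Complex.continuous_re.comp (cdi i)
  have cdim : ∀ i : Fin 2, Continuous fun t => (deriv ψ t i).im :=
    fun i => Complex.continuous_im.comp (cdi i)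
  have hGc : Continuous G := by
    apply Continuous.mul continuous_const
    exact ((((cre 1).mul (cdre 1)).add ((cim 1).mul (cdim 1))).sub
      ((cre 0).mul (cdre 0))).sub ((cim 0).mul (cdim 0))
  have hGsupp : HasCompactSupport G := by
    refine HasCompactSupport.intro hsupp (fun x hx => ?_)
    simp [hGdef, (hzero x hx).1]
  have hGint : Integrable G := hGc.integrable_of_hasCompactSupport hGsupp
  -- measurability of Φ
  have mS : Measurable fun t => ((m * Real.sign t : ℝ) : ℂ) :=
    Complex.measurable_ofReal.comp (measurable_const.mul measurable_realSign)
  have mT0 : Measurable fun t => Tψ t 0 := by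
    have h : (fun t => Tψ t 0)
        = fun t => deriv ψ t 1 + (μ:ℂ) * ψ t 1 + ((m * Real.sign t : ℝ):ℂ) * ψ t 0 :=
      funext fun t => (hcomp t).1
    rw [h]
    exact ((cdi 1).measurable.add (measurable_const.mul (cψi 1).measurable)).add
      (mS.mul (cψi 0).measurable)
  have mT1 : Measurable fun t => Tψ t 1 := by
    have h : (fun t => Tψ t 1)
        = fun t => -(deriv ψ t 0) + (μ:ℂ) * ψ t 0 - ((m * Real.sign t : ℝ):ℂ) * ψ t 1 :=
      funext fun t => (hcomp t).2
    rw [h]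
    exact (((cdi 0).measurable.neg.add (measurable_const.mul (cψi 0).measurable))).sub
      (mS.mul (cψi 1).measurable)
  have mΦ : Measurable Φ := (mT0.norm.pow_const 2).add (mT1.norm.pow_const 2)
  -- integrable bound for Φ
  set B : ℝ → ℝ := fun t => 3*(‖deriv ψ t 1‖^2 + μ^2*‖ψ t 1‖^2 + m^2*‖ψ t 0‖^2)
      + 3*(‖deriv ψ t 0‖^2 + μ^2*‖ψ t 0‖^2 + m^2*‖ψ t 1‖^2) with hBdef
  have hBc : Continuous B := by
    apply Continuous.add <;> apply Continuous.mul continuous_const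
    · exact (((cdi 1).norm.pow 2).add (continuous_const.mul ((cψi 1).norm.pow 2))).add
        (continuous_const.mul ((cψi 0).norm.pow 2))
    · exact (((cdi 0).norm.pow 2).add (continuous_const.mul ((cψi 0).norm.pow 2))).add
        (continuous_const.mul ((cψi 1).norm.pow 2))
  have hBsupp : HasCompactSupport B := by
    refine HasCompactSupport.intro hsupp (fun x hx => ?_)
    simp [hBdef, (hzero x hx).1, (hzero x hx).2]
  have hBint : Integrable B := hBc.integrable_of_hasCompactSupport hBsupp
  have hBd : ∀ t, ‖Φ t‖ ≤ B t := by
    intro t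
    have h0 := bound_aux μ m (Real.sign t) hm0 (abs_realSign_le t)
      (ψ t 0) (ψ t 1) (deriv ψ t 1)
    have h0' : ‖Tψ t 0‖^2 ≤ 3*(‖deriv ψ t 1‖^2 + μ^2*‖ψ t 1‖^2 + m^2*‖ψ t 0‖^2) := by
      rw [(hcomp t).1]; exact h0
    have h1' : ‖Tψ t 1‖^2 ≤ 3*(‖deriv ψ t 0‖^2 + μ^2*‖ψ t 0‖^2 + m^2*‖ψ t 1‖^2) := by
      have heq : ‖Tψ t 1‖
          = ‖deriv ψ t 0 + ((-μ:ℝ):ℂ) * ψ t 0 + ((m * Real.sign t:ℝ):ℂ) * ψ t 1‖ := by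
        rw [(hcomp t).2, ← norm_neg]; congr 1; push_cast; ring
      have h1 := bound_aux (-μ) m (Real.sign t) hm0 (abs_realSign_le t)
        (ψ t 1) (ψ t 0) (deriv ψ t 0)
      rw [heq]
      calc ‖deriv ψ t 0 + ((-μ:ℝ):ℂ) * ψ t 0 + ((m * Real.sign t:ℝ):ℂ) * ψ t 1‖^2
          ≤ 3*(‖deriv ψ t 0‖^2 + (-μ)^2*‖ψ t 0‖^2 + m^2*‖ψ t 1‖^2) := h1
        _ = 3*(‖deriv ψ t 0‖^2 + μ^2*‖ψ t 0‖^2 + m^2*‖ψ t 1‖^2) := by ring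
    have hΦnn : (0:ℝ) ≤ Φ t := by simp only [hΦdef]; positivity
    rw [Real.norm_eq_abs, abs_of_nonneg hΦnn]
    simp only [hΦdef, hBdef]
    linarith
  have hΦint : Integrable Φ :=
    Integrable.mono' hBint mΦ.aestronglyMeasurable (ae_of_all _ hBd)
  -- integrability of N
  have hNint : Integrable N := by
    have h : N = fun t => Φ t - μ^2 * P t - μ * G t := funext fun t => by rw [hpt t]; ring
    rw [h]
    exact (hΦint.sub (hPint.const_mul _)).sub (hGint.const_mul _)
  -- ∫ G = 0 : fundamental theorem of calculus
  have hGzero : ∫ t, G t = 0 := by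
    obtain ⟨r, hr⟩ := (IsCompact.isBounded hsupp).subset_closedBall 0
    have hsub : tsupport ψ ⊆ Set.Icc (-|r|) |r| := by
      refine hr.trans ?_
      rw [Real.closedBall_eq_Icc]
      intro x hx
      simp only [zero_sub, zero_add] at hx
      exact ⟨le_trans (neg_le_neg (le_abs_self r)) hx.1, hx.2.trans (le_abs_self r)⟩
    set R : ℝ := |r| + 1 with hRdef
    have hR0 : (0:ℝ) < R := by rw [hRdef]; positivity
    have hout : ∀ t : ℝ, |r| < |t| → ψ t = 0 ∧ deriv ψ t = 0 := by
      intro t ht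
      apply hzero
      intro hmem
      obtain ⟨h1, h2⟩ := hsub hmem
      rcases abs_cases t with ⟨he, _⟩|⟨he, _⟩ <;> rw [he] at ht <;> linarith
    -- derivative of g
    set g : ℝ → ℝ := fun t => (ψ t 1).re^2 + (ψ t 1).im^2 - (ψ t 0).re^2 - (ψ t 0).im^2
      with hgdef
    have hg : ∀ t, HasDerivAt g (G t) t := by
      intro t
      have hdi : ∀ i : Fin 2, HasDerivAt (fun u => ψ u i) (deriv ψ t i) t := by
        intro i
        have h1 : HasDerivAt ψ (deriv ψ t) t := ((hψ.differentiable (by simp)) t).hasDerivAt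
        exact (ContinuousLinearMap.proj (R := ℝ) (φ := fun _ : Fin 2 => ℂ)
          i).hasFDerivAt.comp_hasDerivAt t h1
      have hre : ∀ i : Fin 2, HasDerivAt (fun u => (ψ u i).re) ((deriv ψ t i).re) t :=
        fun i => Complex.reCLM.hasFDerivAt.comp_hasDerivAt t (hdi i)
      have him : ∀ i : Fin 2, HasDerivAt (fun u => (ψ u i).im) ((deriv ψ t i).im) t :=
        fun i => Complex.imCLM.hasFDerivAt.comp_hasDerivAt t (hdi i)
      have h := ((((hre 1).pow 2).add ((him 1).pow 2)).sub ((hre 0).pow 2)).sub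
        ((him 0).pow 2)
      replace h : HasDerivAt g _ t := h
      convert h using 1
      simp only [hGdef]
      push_cast
      ring
    have hRr : |r| < R := by rw [hRdef]; linarith
    have hgR : g R = 0 := by
      have := (hout R (by rw [abs_of_nonneg (by positivity : (0:ℝ) ≤ R)]; exact hRr)).1
      simp [hgdef, this]
    have hgmR : g (-R) = 0 := by
      have := (hout (-R) (by rw [abs_neg, abs_of_nonneg (by positivity : (0:ℝ) ≤ R)]; exact hRr)).1
      simp [hgdef, this]
    have hle : -R ≤ R := by linarith
    have hFTC : ∫ t in (-R)..R, G t = g R - g (-R) :=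
      intervalIntegral.integral_eq_sub_of_hasDerivAt (fun t _ => hg t)
        (hGc.intervalIntegrable _ _)
    have hfull : ∫ t, G t = ∫ t in Set.Ioc (-R) R, G t := by
      refine (setIntegral_eq_integral_of_forall_compl_eq_zero (fun x hx => ?_)).symm
      have hx' : |r| < |x| := by
        simp only [Set.mem_Ioc, not_and_or, not_lt, not_le] at hx
        rcases hx with h|h
        · rw [abs_of_nonpos (by linarith : x ≤ 0)]
          linarith
        · rw [abs_of_pos (by linarith : 0 < x)]
          linarith
      obtain ⟨h1, h2⟩ := hout x hx'
      simp [hGdef, h1, h2]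
    rw [hfull, ← intervalIntegral.integral_of_le hle, hFTC, hgR, hgmR, sub_zero]
  -- splitting the integral
  have hsplit : ∫ t, Φ t = (∫ t, N t) + μ^2 * (∫ t, P t) + μ * ∫ t, G t := by
    have h0 : (fun t => Φ t) = fun t => N t + μ^2 * P t + μ * G t := funext hpt
    have hI1 : Integrable (fun t => N t + μ^2 * P t) := hNint.add (hPint.const_mul _)
    have e1 : ∫ t, (N t + μ^2 * P t + μ * G t)
        = (∫ t, (N t + μ^2 * P t)) + ∫ t, μ * G t :=
      integral_add hI1 (hGint.const_mul _)
    have e2 : ∫ t, (N t + μ^2 * P t) = (∫ t, N t) + ∫ t, μ^2 * P t :=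
      integral_add hNint (hPint.const_mul _)
    rw [h0, e1, e2, integral_const_mul, integral_const_mul]
  -- conclusion
  have hPpos : 0 ≤ ∫ t, P t := integral_nonneg (fun t => by simp only [hPdef]; positivity)
  have hNpos : 0 ≤ ∫ t, N t := integral_nonneg (fun t => by simp only [hNdef]; positivity)
  have hμ2 : lamA^2 ≤ μ^2 := by nlinarith [sq_abs μ, abs_nonneg μ]
  calc lamA ^ 2 * ∫ t : ℝ, (‖ψ t 0‖ ^ 2 + ‖ψ t 1‖ ^ 2)
      ≤ μ^2 * ∫ t, P t := mul_le_mul_of_nonneg_right hμ2 hPpos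
    _ ≤ (∫ t, N t) + μ^2 * (∫ t, P t) + μ * ∫ t, G t := by
        rw [hGzero]; linarith
    _ = ∫ t, Φ t := hsplit.symm
    _ = ∫ t : ℝ, (‖Tψ t 0‖ ^ 2 + ‖Tψ t 1‖ ^ 2) := rfl
end
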